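/- Triviality of Stanley's g-weights for simple polytopes: if P is simple, then g̃_Q(t) = 1 for every nonempty face Q of P. -/

import Mathlib

open Pointwise

noncomputable section

/-- A point of `ℝⁿ` is a lattice point if all of its coordinates are integers. -/
def IsLatticePt {n : ℕ} (x : Fin n → ℝ) : Prop := ∀ i, ∃ m : ℤ, x i = (m : ℝ)

/-- The number of lattice points of a subset `S ⊂ ℝⁿ` (i.e. `|S ∩ M|` for `M = ℤⁿ`). -/
def latticeCount {n : ℕ} (S : Set (Fin n → ℝ)) : ℕ := {x ∈ S | IsLatticePt x}.ncard

/-- `P` is a full-dimensional lattice polytope in `ℝⁿ`: the convex hull of a finite set of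
lattice points whose affine span is all of `ℝⁿ`. -/
def IsFullLatticePolytope (n : ℕ) (P : Set (Fin n → ℝ)) : Prop :=
  ∃ V : Finset (Fin n → ℝ), (∀ v ∈ V, IsLatticePt v) ∧
    P = convexHull ℝ (V : Set (Fin n → ℝ)) ∧ affineSpan ℝ P = ⊤

/-- `Q` is a face of `P`: either `P` itself, or an exposed face
`{x ∈ P : φ(x) = max_P φ}` for a linear functional `φ`. -/
def IsFace {n : ℕ} (P Q : Set (Fin n → ℝ)) : Prop :=
  Q = P ∨ ∃ φ : (Fin n → ℝ) →ₗ[ℝ] ℝ, Q = {x | x ∈ P ∧ ∀ z ∈ P, φ z ≤ φ x}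

/-- The collection of nonempty faces of `P`. -/
def faces {n : ℕ} (P : Set (Fin n → ℝ)) : Set (Set (Fin n → ℝ)) :=
  {Q | IsFace P Q ∧ Q.Nonempty}

/-- The dimension of (the affine span of) a subset of `ℝⁿ`. -/
def pdim {n : ℕ} (Q : Set (Fin n → ℝ)) : ℕ :=
  Module.finrank ℝ (affineSpan ℝ Q).direction

/-- Stanley's g-weights `g̃_Q(t) ∈ ℤ[t]`, characterized by downward recursion on `dim Q`:
`g̃_P = 1`, and for a proper nonempty face `Q`, writing
`h̃_Q(t) = Σ_{R : Q ⪇ R ⪯ P} g̃_R(t)·(t−1)^{dim R − dim Q − 1}` (a polynomial of degree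
`d = n − 1 − dim Q`), one has `g̃_Q(t) = h₀ + Σ_{i=1}^{⌊d/2⌋} (h_i − h_{i−1}) tⁱ`
where `h_i` are the coefficients of `h̃_Q`. -/
def gRecursion (n : ℕ) (P : Set (Fin n → ℝ)) (g : Set (Fin n → ℝ) → Polynomial ℤ) : Prop :=
  g P = 1 ∧
  ∀ Q ∈ faces P, Q ≠ P →
    g Q =
      (fun h : Polynomial ℤ =>
        Polynomial.C (h.coeff 0) +
          ∑ i ∈ Finset.Icc 1 ((n - 1 - pdim Q) / 2),
            Polynomial.C (h.coeff i - h.coeff (i - 1)) * Polynomial.X ^ i)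
      (∑ᶠ R ∈ {R | IsFace P R ∧ Q ⊂ R},
        g R * (Polynomial.X - 1) ^ (pdim R - pdim Q - 1))

/-- `P` is a simple polytope: every vertex (face of dimension `0`) is contained in exactly
`n` facets (faces of dimension `n−1`). -/
def IsSimple (n : ℕ) (P : Set (Fin n → ℝ)) : Prop :=
  ∀ Q ∈ faces P, pdim Q = 0 →
    {F | F ∈ faces P ∧ pdim F = n - 1 ∧ Q ⊆ F}.ncard = n


/-!
Describe a face of `P = conv V` by the points of `V` it contains: the maximizers of a linear
functional. Tilting a supporting functional shows that a face of dimension `d` lies in a face of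
dimension `d + 1` inside any larger face, and that every face is the intersection of the facets
containing it. At a vertex of a simple polytope these two facts force a face `Q` to lie in exactly
`c = n - dim Q` facets, and every subset of them to be the set of facets containing some face above
`Q`, a face of dimension `dim Q + k` corresponding to `c - k` facets. Hence the faces above `Q`
form a Boolean lattice, and once all g-weights above `Q` are known to be `1`,
`h̃_Q(t) = Σ_{k=1}^{c} C(c, k) (t - 1)^(k - 1) = 1 + t + ⋯ + t^(c - 1)`, whose coefficients are
constant, so `g̃_Q = 1`.
-/

namespace SimplePolytope

open Finset Module Filter Topology
open scoped Classical

variable {E : Type*} [AddCommGroup E] [Module ℝ E]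

def maxSet (W : Finset E) (φ : Dual ℝ E) : Finset E := {v ∈ W | ∀ w ∈ W, φ w ≤ φ v}

section maxSet

variable {W : Finset E} {φ : Dual ℝ E} {x y : E}

@[simp] lemma mem_maxSet : x ∈ maxSet W φ ↔ x ∈ W ∧ ∀ w ∈ W, φ w ≤ φ x := mem_filter

lemma maxSet_subset : maxSet W φ ⊆ W := filter_subset _ _

lemma maxSet_nonempty (hW : W.Nonempty) : (maxSet W φ).Nonempty := by
  obtain ⟨b, hb, hmax⟩ := W.exists_max_image φ hW
  exact ⟨b, mem_maxSet.2 ⟨hb, hmax⟩⟩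

lemma maxSet_zero : maxSet W 0 = W := by
  ext; simp

lemma mem_maxSet_iff_le (hx : x ∈ maxSet W φ) : y ∈ maxSet W φ ↔ y ∈ W ∧ φ x ≤ φ y := by
  rw [mem_maxSet] at hx ⊢
  exact and_congr_right fun _ ↦ ⟨fun h ↦ h x hx.1, fun h w hw ↦ (hx.2 w hw).trans h⟩

lemma apply_eq_of_mem_maxSet (hx : x ∈ maxSet W φ) (hy : y ∈ maxSet W φ) : φ y = φ x :=
  le_antisymm ((mem_maxSet.1 hx).2 y (mem_maxSet.1 hy).1) ((mem_maxSet_iff_le hx).1 hy).2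

lemma apply_lt_of_notMem_maxSet (hx : x ∈ maxSet W φ) (hy : y ∈ W) (hy' : y ∉ maxSet W φ) :
    φ y < φ x :=
  lt_of_not_ge fun h ↦ hy' ((mem_maxSet_iff_le hx).2 ⟨hy, h⟩)

lemma maxSet_ssubset (hx : x ∈ W) (hy : y ∈ W) (h : φ x < φ y) : maxSet W φ ⊂ W :=
  ssubset_of_subset_not_subset maxSet_subset fun hW ↦ (mem_maxSet.1 (hW hx)).2 y hy |>.not_gt h

lemma maxSet_eq_of_subset {V : Finset E} (hWV : W ⊆ V) (hW : maxSet V φ ⊆ W)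
    (hV : V.Nonempty) : maxSet W φ = maxSet V φ := by
  obtain ⟨b, hb⟩ := maxSet_nonempty (φ := φ) hV
  have hbW : b ∈ maxSet W φ := mem_maxSet.2 ⟨hW hb, fun w hw ↦ (mem_maxSet.1 hb).2 w (hWV hw)⟩
  ext y
  rw [mem_maxSet_iff_le hb, mem_maxSet_iff_le hbW]
  exact ⟨fun h ↦ ⟨hWV h.1, h.2⟩, fun h ↦ ⟨hW ((mem_maxSet_iff_le hb).2 h), h.2⟩⟩

lemma eventually_maxSet_add_smul (V : Finset E) (φ ψ : Dual ℝ E) :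
    ∀ᶠ ε in 𝓝[>] (0 : ℝ), maxSet V (φ + ε • ψ) = maxSet (maxSet V φ) ψ := by
  set W := maxSet V φ
  have hgap : ∀ᶠ ε in 𝓝 (0 : ℝ), ∀ u ∈ V \ W, ∀ x ∈ W, φ u + ε * ψ u < φ x + ε * ψ x := by
    refine (eventually_all_finset _).2 fun u hu ↦ (eventually_all_finset _).2 fun x hx ↦ ?_
    have hlt : φ u < φ x := apply_lt_of_notMem_maxSet hx (mem_sdiff.1 hu).1 (mem_sdiff.1 hu).2
    have hcont : Continuous fun ε : ℝ ↦ φ x + ε * ψ x - (φ u + ε * ψ u) := by fun_prop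
    filter_upwards [(hcont.tendsto' 0 (φ x - φ u) (by simp)).eventually_const_lt (sub_pos.2 hlt)]
      with ε hε using by linarith
  filter_upwards [nhdsWithin_le_nhds hgap, self_mem_nhdsWithin] with ε hε (hpos : 0 < ε)
  have happly (w : E) : (φ + ε • ψ) w = φ w + ε * ψ w := rfl
  ext y
  constructor
  · intro hy
    obtain ⟨hyV, hymax⟩ := mem_maxSet.1 hy
    have hyW : y ∈ W := by
      by_contra hyW
      obtain ⟨x, hx⟩ := maxSet_nonempty (φ := φ) ⟨y, hyV⟩
      have := hymax x (maxSet_subset hx)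
      rw [happly, happly] at this
      linarith [hε y (mem_sdiff.2 ⟨hyV, hyW⟩) x hx]
    refine mem_maxSet.2 ⟨hyW, fun w hw ↦ le_of_mul_le_mul_left ?_ hpos⟩
    have := hymax w (maxSet_subset hw)
    rw [happly, happly, apply_eq_of_mem_maxSet hyW hw] at this
    linarith
  · intro hy
    have hyW : y ∈ W := maxSet_subset hy
    refine mem_maxSet.2 ⟨maxSet_subset hyW, fun w hw ↦ ?_⟩
    rw [happly, happly]
    by_cases hwW : w ∈ W
    · rw [apply_eq_of_mem_maxSet hyW hwW]
      gcongr
      exact (mem_maxSet.1 hy).2 w hwW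
    · exact (hε w (mem_sdiff.2 ⟨hw, hwW⟩) y hyW).le

end maxSet

def IsExposedSubset (V B : Finset E) : Prop := ∃ φ : Dual ℝ E, B = maxSet V φ

def dim (B : Finset E) : ℕ := finrank ℝ (vectorSpan ℝ (B : Set E))

lemma nonempty_of_affineSpan_eq_top {V : Finset E} (hV : affineSpan ℝ (V : Set E) = ⊤) :
    V.Nonempty :=
  coe_nonempty.1 (AffineSubspace.nonempty_of_affineSpan_eq_top ℝ E E hV)

lemma dim_eq_finrank {V : Finset E} (hV : affineSpan ℝ (V : Set E) = ⊤) : dim V = finrank ℝ E := by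
  rw [dim, ← direction_affineSpan, hV, AffineSubspace.direction_top, finrank_top]

lemma dim_singleton (v : E) : dim ({v} : Finset E) = 0 := by
  rw [dim, coe_singleton, vectorSpan_singleton, finrank_bot]

lemma dim_le_finrank [FiniteDimensional ℝ E] (B : Finset E) : dim B ≤ finrank ℝ E :=
  Submodule.finrank_le _

namespace IsExposedSubset

variable {V B C : Finset E}

lemma refl (V : Finset E) : IsExposedSubset V V := ⟨0, maxSet_zero.symm⟩

lemma subset (hB : IsExposedSubset V B) : B ⊆ V := by
  obtain ⟨φ, rfl⟩ := hB
  exact maxSet_subset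

lemma nonempty (hB : IsExposedSubset V B) (hV : V.Nonempty) : B.Nonempty := by
  obtain ⟨φ, rfl⟩ := hB
  exact maxSet_nonempty hV

lemma trans (hB : IsExposedSubset V B) (hC : IsExposedSubset B C) : IsExposedSubset V C := by
  obtain ⟨φ, rfl⟩ := hB
  obtain ⟨ψ, rfl⟩ := hC
  obtain ⟨ε, hε⟩ := (eventually_maxSet_add_smul V φ ψ).exists
  exact ⟨φ + ε • ψ, hε.symm⟩

lemma of_subset (hB : IsExposedSubset V B) (hCV : C ⊆ V) (hBC : B ⊆ C) (hV : V.Nonempty) :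
    IsExposedSubset C B := by
  obtain ⟨φ, rfl⟩ := hB
  exact ⟨φ, (maxSet_eq_of_subset hCV hBC hV).symm⟩

lemma mem_of_mem_affineSpan (hB : IsExposedSubset V B) {u : E} (hu : u ∈ V)
    (h : u ∈ affineSpan ℝ (B : Set E)) : u ∈ B := by
  obtain ⟨φ, rfl⟩ := hB
  obtain ⟨b, hb⟩ : (maxSet V φ).Nonempty := maxSet_nonempty ⟨u, hu⟩
  have hker : vectorSpan ℝ (maxSet V φ : Set E) ≤ LinearMap.ker φ := by
    refine Submodule.span_le.2 ?_
    rintro _ ⟨x, hx, y, hy, rfl⟩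
    simp [apply_eq_of_mem_maxSet hx hy]
  have hub : u - b ∈ vectorSpan ℝ (maxSet V φ : Set E) := by
    rw [← direction_affineSpan]
    exact AffineSubspace.vsub_mem_direction h (mem_affineSpan ℝ hb)
  have := hker hub
  rw [LinearMap.mem_ker, map_sub, sub_eq_zero] at this
  exact (mem_maxSet_iff_le hb).2 ⟨hu, this.ge⟩

lemma dim_lt_dim [FiniteDimensional ℝ E] (hB : IsExposedSubset V B) (hCV : C ⊆ V)
    (hBC : B ⊂ C) : dim B < dim C := by
  obtain ⟨c, hc, -⟩ := exists_of_ssubset hBC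
  obtain ⟨b, hb⟩ := hB.nonempty ⟨c, hCV hc⟩
  have hle : vectorSpan ℝ (B : Set E) ≤ vectorSpan ℝ (C : Set E) :=
    vectorSpan_mono ℝ (coe_subset.2 hBC.subset)
  refine (Submodule.finrank_mono hle).lt_of_ne fun hdim ↦ hBC.not_subset fun u hu ↦ ?_
  have hspan : affineSpan ℝ (B : Set E) = affineSpan ℝ (C : Set E) := by
    refine AffineSubspace.eq_of_direction_eq_of_nonempty_of_le ?_
      ⟨b, mem_affineSpan ℝ (mem_coe.2 hb)⟩ (affineSpan_mono ℝ (coe_subset.2 hBC.subset))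
    rw [direction_affineSpan, direction_affineSpan]
    exact Submodule.eq_of_le_of_finrank_eq hle hdim
  exact hB.mem_of_mem_affineSpan (hCV hu) (hspan ▸ mem_affineSpan ℝ (mem_coe.2 hu))

lemma exists_vertex (hB : IsExposedSubset V B) (hne : B.Nonempty) :
    ∃ v ∈ B, IsExposedSubset V {v} := by
  obtain ⟨C, hC, hmin⟩ := exists_min_image {C ∈ B.powerset | IsExposedSubset V C ∧ C.Nonempty}
    card ⟨B, by simpa using ⟨hB, hne⟩⟩
  obtain ⟨hCB, hCexp, hCne⟩ : C ⊆ B ∧ IsExposedSubset V C ∧ C.Nonempty := by simpa using hC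
  obtain ⟨v, rfl⟩ | ⟨x, hx, y, hy, hxy⟩ := hCne.exists_eq_singleton_or_nontrivial
  · exact ⟨v, hCB (mem_singleton_self v), hCexp⟩
  obtain ⟨f, hf⟩ : ∃ f : Dual ℝ E, f (x - y) ≠ 0 := by
    by_contra! h
    exact hxy (sub_eq_zero.1 ((forall_dual_apply_eq_zero_iff ℝ _).1 h))
  have hssub : maxSet C f ⊂ C := by
    rw [map_sub, sub_ne_zero] at hf
    rcases hf.lt_or_gt with h | h
    · exact maxSet_ssubset hx hy h
    · exact maxSet_ssubset hy hx h
  have hcand : maxSet C f ∈ {C ∈ B.powerset | IsExposedSubset V C ∧ C.Nonempty} := by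
    simpa using ⟨maxSet_subset.trans hCB, hCexp.trans ⟨f, rfl⟩, maxSet_nonempty hCne⟩
  exact absurd (hmin _ hcand) (card_lt_card hssub).not_ge

end IsExposedSubset

section ConvexHull

variable {V B C : Finset E}

lemma exposedFace_convexHull (V : Finset E) (φ : Dual ℝ E) :
    {x | x ∈ convexHull ℝ (V : Set E) ∧ ∀ z ∈ convexHull ℝ (V : Set E), φ z ≤ φ x} =
      convexHull ℝ (maxSet V φ : Set E) := by
  have hle {x : E} (b : E) (hb : b ∈ maxSet V φ) (hx : x ∈ convexHull ℝ (V : Set E)) :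
      φ x ≤ φ b :=
    convexHull_min (fun w hw ↦ (mem_maxSet.1 hb).2 w hw) (convex_halfSpace_le φ.isLinear _) hx
  refine Set.Subset.antisymm (fun x ⟨hxV, hxmax⟩ ↦ ?_) fun x hx ↦ ⟨?_, fun z hz ↦ ?_⟩
  · obtain ⟨w, hw0, hw1, rfl⟩ := mem_convexHull'.1 hxV
    obtain ⟨b, hb⟩ := maxSet_nonempty (φ := φ) (nonempty_of_sum_ne_zero (hw1 ▸ one_ne_zero))
    -- the weights average `φ b - φ y ≥ 0` to `0`, so they vanish off the maximizers
    have hgap : ∑ y ∈ V, w y * (φ b - φ y) = 0 := by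
      have := le_antisymm (hle b hb hxV) (hxmax b (subset_convexHull ℝ _ (maxSet_subset hb)))
      simp only [mul_sub, sum_sub_distrib, ← sum_mul, hw1, map_sum, map_smul, smul_eq_mul] at this ⊢
      linarith
    have hzero : ∀ y ∈ V, y ∉ maxSet V φ → w y = 0 := fun y hy hy' ↦
      (mul_eq_zero.1 ((sum_eq_zero_iff_of_nonneg fun y hy ↦ mul_nonneg (hw0 y hy)
        (sub_nonneg.2 ((mem_maxSet.1 hb).2 y hy))).1 hgap y hy)).resolve_right
        (sub_ne_zero.2 (apply_lt_of_notMem_maxSet hb hy hy').ne')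
    refine mem_convexHull'.2 ⟨w, fun y hy ↦ hw0 y (maxSet_subset hy), ?_, ?_⟩
    · rwa [sum_subset maxSet_subset hzero]
    · exact sum_subset maxSet_subset fun y hy hy' ↦ by simp [hzero y hy hy']
  · exact convexHull_mono (coe_subset.2 maxSet_subset) hx
  · obtain ⟨b, hb⟩ := (convexHull_nonempty_iff.1 ⟨x, hx⟩ : (maxSet V φ : Set E).Nonempty)
    exact (hle b hb hz).trans (convexHull_min (fun w hw ↦ ((mem_maxSet_iff_le hb).1 hw).2)
      (convex_halfSpace_ge φ.isLinear _) hx)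

lemma IsExposedSubset.mem_convexHull_iff (hC : IsExposedSubset V C) {u : E} (hu : u ∈ V) :
    u ∈ convexHull ℝ (C : Set E) ↔ u ∈ C :=
  ⟨fun h ↦ hC.mem_of_mem_affineSpan hu (convexHull_subset_affineSpan _ h),
    fun h ↦ subset_convexHull ℝ _ h⟩

lemma convexHull_subset_convexHull_iff (hBV : B ⊆ V) (hC : IsExposedSubset V C) :
    convexHull ℝ (B : Set E) ⊆ convexHull ℝ (C : Set E) ↔ B ⊆ C :=
  ⟨fun h _ hu ↦ (hC.mem_convexHull_iff (hBV hu)).1 (h (subset_convexHull ℝ _ hu)),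
    fun h ↦ convexHull_mono (coe_subset.2 h)⟩

lemma convexHull_injOn :
    Set.InjOn (fun B : Finset E ↦ convexHull ℝ (B : Set E)) {B | IsExposedSubset V B} :=
  fun _ hB _ hC h ↦ Subset.antisymm
    ((convexHull_subset_convexHull_iff (hB : IsExposedSubset V _).subset hC).1 h.le)
    ((convexHull_subset_convexHull_iff (hC : IsExposedSubset V _).subset hB).1 h.ge)

lemma convexHull_ssubset_convexHull_iff (hB : IsExposedSubset V B) (hC : IsExposedSubset V C) :
    convexHull ℝ (B : Set E) ⊂ convexHull ℝ (C : Set E) ↔ B ⊂ C := by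
  rw [Set.ssubset_def, Finset.ssubset_def, convexHull_subset_convexHull_iff hB.subset hC,
    convexHull_subset_convexHull_iff hC.subset hB]

end ConvexHull

section Enlarge

variable {W : Finset E}

lemma exists_maxSet_add_smul_ssuperset {ψ η : Dual ℝ E} {b u : E} (hb : b ∈ maxSet W ψ)
    (hη : ∀ x ∈ maxSet W ψ, η x = η b) (hu : u ∈ W) (hbu : η b < η u) :
    ∃ s : ℝ, 0 < s ∧ maxSet W ψ ⊂ maxSet W (ψ + s • η) ∧
      ∀ x ∈ maxSet W (ψ + s • η), x ∉ maxSet W ψ → η b < η x := by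
  set T := {v ∈ W | η b < η v}
  have hTψ : ∀ v ∈ T, ψ v < ψ b := fun v hv ↦
    apply_lt_of_notMem_maxSet hb (mem_filter.1 hv).1
      fun h ↦ (mem_filter.1 hv).2.ne (hη v h).symm
  -- the first rotation angle at which a point with larger `η` becomes a maximizer
  set r : E → ℝ := fun v ↦ (ψ b - ψ v) / (η v - η b)
  obtain ⟨u₁, hu₁T, hu₁⟩ := exists_min_image T r ⟨u, mem_filter.2 ⟨hu, hbu⟩⟩
  have hη₁ : 0 < η u₁ - η b := sub_pos.2 (mem_filter.1 hu₁T).2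
  set s := r u₁
  have hs : 0 < s := div_pos (sub_pos.2 (hTψ u₁ hu₁T)) hη₁
  have happly (w : E) : (ψ + s • η) w = ψ w + s * η w := rfl
  have hle : ∀ w ∈ W, ψ w + s * η w ≤ ψ b + s * η b := by
    intro w hw
    by_cases hwT : w ∈ T
    · have := (le_div_iff₀ (sub_pos.2 (mem_filter.1 hwT).2)).1 (hu₁ w hwT)
      linarith
    · have hηw : η w ≤ η b := not_lt.1 fun h ↦ hwT (mem_filter.2 ⟨hw, h⟩)
      nlinarith [(mem_maxSet.1 hb).2 w hw]
  have hbmax : b ∈ maxSet W (ψ + s • η) :=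
    mem_maxSet.2 ⟨(mem_maxSet.1 hb).1, fun w hw ↦ by simpa only [happly] using hle w hw⟩
  have hmem (x : E) : x ∈ maxSet W (ψ + s • η) ↔ x ∈ W ∧ ψ b + s * η b ≤ ψ x + s * η x := by
    rw [mem_maxSet_iff_le hbmax, happly, happly]
  have hu₁eq : ψ u₁ + s * η u₁ = ψ b + s * η b := by
    have : s * (η u₁ - η b) = ψ b - ψ u₁ := div_mul_cancel₀ _ hη₁.ne'
    linarith
  refine ⟨s, hs, ssubset_of_subset_not_subset (fun x hx ↦ ?_) (fun h ↦ ?_), fun x hx hxold ↦ ?_⟩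
  · rw [hmem, apply_eq_of_mem_maxSet hb hx, hη x hx]
    exact ⟨maxSet_subset hx, le_rfl⟩
  · have := hη u₁ (h ((hmem u₁).2 ⟨(mem_filter.1 hu₁T).1, hu₁eq.ge⟩))
    linarith
  · have hψx := apply_lt_of_notMem_maxSet hb (maxSet_subset hx) hxold
    have := ((hmem x).1 hx).2
    exact lt_of_mul_lt_mul_left (by linarith) hs.le

lemma exists_maxSet_ssuperset_notMem [FiniteDimensional ℝ E] {ψ : Dual ℝ E} {w : E}
    (hw : w ∈ W) (hw' : w ∉ maxSet W ψ) (hdim : dim (maxSet W ψ) + 2 ≤ dim W) :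
    ∃ ψ' : Dual ℝ E, maxSet W ψ ⊂ maxSet W ψ' ∧ w ∉ maxSet W ψ' := by
  obtain ⟨b, hb⟩ := maxSet_nonempty (φ := ψ) ⟨w, hw⟩
  set Z := vectorSpan ℝ (maxSet W ψ : Set E) ⊔ ℝ ∙ (w - b)
  have hZ : finrank ℝ Z < dim W :=
    calc finrank ℝ Z ≤ dim (maxSet W ψ) + finrank ℝ (ℝ ∙ (w - b)) :=
          Submodule.finrank_add_le_finrank_add_finrank _ _
      _ ≤ dim (maxSet W ψ) + 1 := by
          gcongr
          exact (finrank_span_le_card ({w - b} : Set E)).trans (by simp)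
      _ < dim W := by omega
  obtain ⟨u, hu, huZ⟩ : ∃ u ∈ W, u - b ∉ Z := by
    by_contra! h
    refine (Submodule.finrank_mono ?_).not_gt hZ
    rw [vectorSpan_eq_span_vsub_set_right ℝ (mem_coe.2 (maxSet_subset hb)), Submodule.span_le]
    rintro _ ⟨x, hx, rfl⟩
    exact h x hx
  obtain ⟨f, hfu, hfZ⟩ := Submodule.exists_dual_map_eq_bot_of_notMem huZ inferInstance
  set η : Dual ℝ E := f (u - b) • f
  have hη : ∀ x, x - b ∈ Z → η x = η b := by
    intro x hx
    have : f (x - b) = 0 := by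
      simpa [hfZ] using Submodule.mem_map_of_mem (f := f) hx
    simp [η, sub_eq_zero.1 (map_sub f x b ▸ this)]
  have hbu : η b < η u := by
    have : 0 < η (u - b) := by simpa [η] using hfu
    rwa [map_sub, sub_pos] at this
  obtain ⟨s, -, hss, hnew⟩ := exists_maxSet_add_smul_ssuperset hb
    (fun x hx ↦ hη x (Submodule.mem_sup_left (vsub_mem_vectorSpan ℝ hx hb))) hu hbu
  exact ⟨ψ + s • η, hss, fun h ↦ (hnew w h hw').ne
    (hη w (Submodule.mem_sup_right (Submodule.mem_span_singleton_self _))).symm⟩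

end Enlarge

namespace IsExposedSubset

variable {V B C : Finset E} [FiniteDimensional ℝ E]

lemma exists_dim_eq_add_one (hB : IsExposedSubset V B) (hC : IsExposedSubset V C)
    (hBC : B ⊂ C) : ∃ D, IsExposedSubset V D ∧ B ⊂ D ∧ D ⊆ C ∧ dim D = dim B + 1 := by
  obtain ⟨D, hD, hmin⟩ := exists_min_image {D ∈ C.powerset | IsExposedSubset V D ∧ B ⊂ D} card
    ⟨C, by simpa using ⟨hC, hBC⟩⟩
  obtain ⟨hDC, hDexp, hBD⟩ : D ⊆ C ∧ IsExposedSubset V D ∧ B ⊂ D := by simpa using hD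
  refine ⟨D, hDexp, hBD, hDC, le_antisymm ?_ (hB.dim_lt_dim hDexp.subset hBD)⟩
  by_contra! hdim
  obtain ⟨w, hwD, hwB⟩ := exists_of_ssubset hBD
  obtain ⟨ψ, hψ⟩ := hB.of_subset hDexp.subset hBD.subset ⟨w, hDexp.subset hwD⟩
  obtain ⟨ψ', hss, hw'⟩ := exists_maxSet_ssuperset_notMem hwD (hψ ▸ hwB) (by rw [← hψ]; omega)
  have hcand : maxSet D ψ' ∈ {D ∈ C.powerset | IsExposedSubset V D ∧ B ⊂ D} :=
    mem_filter.2 ⟨mem_powerset.2 (maxSet_subset.trans hDC), hDexp.trans ⟨ψ', rfl⟩, hψ ▸ hss⟩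
  exact (hmin _ hcand).not_gt
    (card_lt_card (ssubset_of_subset_not_subset maxSet_subset fun h ↦ hw' (h hwD)))

lemma exists_facet_notMem (hV : affineSpan ℝ (V : Set E) = ⊤) (hB : IsExposedSubset V B)
    {u : E} (hu : u ∈ V) (huB : u ∉ B) :
    ∃ C, IsExposedSubset V C ∧ dim C = finrank ℝ E - 1 ∧ B ⊆ C ∧ u ∉ C := by
  obtain ⟨C, hC, hmax⟩ := exists_max_image
    {C ∈ V.powerset | IsExposedSubset V C ∧ B ⊆ C ∧ u ∉ C} card
    ⟨B, by simpa using ⟨hB.subset, hB, huB⟩⟩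
  obtain ⟨-, hCexp, hBC, huC⟩ : C ⊆ V ∧ IsExposedSubset V C ∧ B ⊆ C ∧ u ∉ C := by
    simpa using hC
  refine ⟨C, hCexp, ?_, hBC, huC⟩
  have hlt : dim C < finrank ℝ E := dim_eq_finrank hV ▸
    hCexp.dim_lt_dim Subset.rfl (ssubset_of_subset_not_subset hCexp.subset fun h ↦ huC (h hu))
  by_contra hne
  obtain ⟨ψ, rfl⟩ := hCexp
  obtain ⟨ψ', hss, hu'⟩ :=
    exists_maxSet_ssuperset_notMem hu huC (by rw [dim_eq_finrank hV]; omega)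
  have hcand : maxSet V ψ' ∈ {C ∈ V.powerset | IsExposedSubset V C ∧ B ⊆ C ∧ u ∉ C} :=
    mem_filter.2 ⟨mem_powerset.2 maxSet_subset, ⟨ψ', rfl⟩, hBC.trans hss.subset, hu'⟩
  exact (hmax _ hcand).not_gt (card_lt_card hss)

end IsExposedSubset

def facetsContaining (V B : Finset E) : Finset (Finset E) :=
  {C ∈ V.powerset | IsExposedSubset V C ∧ dim C = finrank ℝ E - 1 ∧ B ⊆ C}

def HasSimpleVertices (V : Finset E) : Prop :=
  ∀ v, IsExposedSubset V {v} → #(facetsContaining V {v}) = finrank ℝ E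

section Facets

variable {V B C : Finset E}

lemma mem_facetsContaining :
    C ∈ facetsContaining V B ↔ IsExposedSubset V C ∧ dim C = finrank ℝ E - 1 ∧ B ⊆ C := by
  rw [facetsContaining, mem_filter, mem_powerset]
  exact ⟨fun h ↦ h.2, fun h ↦ ⟨h.1.subset, h⟩⟩

lemma facetsContaining_anti (h : B ⊆ C) : facetsContaining V C ⊆ facetsContaining V B :=
  fun _ hF ↦ mem_facetsContaining.2 <| (mem_facetsContaining.1 hF).imp_right
    fun hF ↦ hF.imp_right h.trans

lemma facetsContaining_self (hV : affineSpan ℝ (V : Set E) = ⊤) (hpos : 0 < finrank ℝ E) :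
    facetsContaining V V = ∅ := by
  refine eq_empty_of_forall_notMem fun C hC ↦ ?_
  obtain ⟨hCexp, hdim, hVC⟩ := mem_facetsContaining.1 hC
  rw [Subset.antisymm hCexp.subset hVC, dim_eq_finrank hV] at hdim
  omega

variable [FiniteDimensional ℝ E]

lemma subset_of_facetsContaining_subset (hV : affineSpan ℝ (V : Set E) = ⊤) (hBV : B ⊆ V)
    (hC : IsExposedSubset V C) (h : facetsContaining V C ⊆ facetsContaining V B) : B ⊆ C := by
  intro u hu
  by_contra huC
  obtain ⟨F, hF, hdim, hCF, huF⟩ := hC.exists_facet_notMem hV (hBV hu) huC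
  exact huF ((mem_facetsContaining.1 (h (mem_facetsContaining.2 ⟨hF, hdim, hCF⟩))).2.2 hu)

lemma facetsContaining_injOn (hV : affineSpan ℝ (V : Set E) = ⊤) :
    Set.InjOn (facetsContaining V) {B | IsExposedSubset V B} := fun _ hB _ hC h ↦
  Subset.antisymm (subset_of_facetsContaining_subset hV (hB : IsExposedSubset V _).subset hC h.ge)
    (subset_of_facetsContaining_subset hV (hC : IsExposedSubset V _).subset hB h.le)

lemma facetsContaining_ssubset (hV : affineSpan ℝ (V : Set E) = ⊤) (hB : IsExposedSubset V B)
    (hC : IsExposedSubset V C) (hBC : B ⊂ C) : facetsContaining V C ⊂ facetsContaining V B :=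
  ssubset_of_subset_of_ne (facetsContaining_anti hBC.subset) fun h ↦
    hBC.ne (facetsContaining_injOn hV hB hC h.symm)

lemma card_facetsContaining_add_le (hV : affineSpan ℝ (V : Set E) = ⊤)
    (hB : IsExposedSubset V B) (hC : IsExposedSubset V C) (hBC : B ⊆ C) :
    #(facetsContaining V C) + (dim C - dim B) ≤ #(facetsContaining V B) := by
  induction hk : dim C - dim B generalizing B with
  | zero => simpa using card_le_card (facetsContaining_anti (V := V) hBC)
  | succ k ih =>
    have hBC' : B ⊂ C := ssubset_of_subset_of_ne hBC (by rintro rfl; simp at hk)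
    obtain ⟨D, hD, hBD, hDC, hdim⟩ := hB.exists_dim_eq_add_one hC hBC'
    have := ih hD hDC (by omega)
    have := card_lt_card (facetsContaining_ssubset hV hB hD hBD)
    omega

lemma card_facetsContaining (hV : affineSpan ℝ (V : Set E) = ⊤) (hpos : 0 < finrank ℝ E)
    (hsimple : HasSimpleVertices V) (hB : IsExposedSubset V B) :
    #(facetsContaining V B) = finrank ℝ E - dim B := by
  have hVne := nonempty_of_affineSpan_eq_top hV
  obtain ⟨v, hvB, hv⟩ := hB.exists_vertex (hB.nonempty hVne)
  have hvert := card_facetsContaining_add_le hV hv hB (singleton_subset_iff.2 hvB)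
  have htop := card_facetsContaining_add_le hV hB (.refl V) hB.subset
  rw [hsimple v hv, dim_singleton] at hvert
  rw [facetsContaining_self hV hpos, dim_eq_finrank hV, card_empty] at htop
  omega

lemma exists_facetsContaining_eq_erase (hV : affineSpan ℝ (V : Set E) = ⊤)
    (hpos : 0 < finrank ℝ E) (hsimple : HasSimpleVertices V) (hB : IsExposedSubset V B)
    (hC : C ∈ facetsContaining V B) :
    ∃ D, IsExposedSubset V D ∧ B ⊆ D ∧
      facetsContaining V D = (facetsContaining V B).erase C := by
  obtain ⟨hCexp, hCdim, hBC⟩ := mem_facetsContaining.1 hC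
  obtain ⟨u, hu, huC⟩ : ∃ u ∈ V, u ∉ C := by
    by_contra! h
    rw [Subset.antisymm hCexp.subset h, dim_eq_finrank hV] at hCdim
    omega
  obtain ⟨b, hb⟩ := hB.nonempty ⟨u, hu⟩
  obtain ⟨φ, rfl⟩ := hCexp
  obtain ⟨ψ, rfl⟩ := hB
  -- tilting the functional of `B` away from `C` adds points to `B`, but none of `C`
  obtain ⟨s, -, hss, hnew⟩ := exists_maxSet_add_smul_ssuperset (η := -φ) hb
    (fun x hx ↦ by simp [apply_eq_of_mem_maxSet (hBC hb) (hBC hx)]) hu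
    (by simpa using apply_lt_of_notMem_maxSet (hBC hb) hu huC)
  have hinter : ∀ x ∈ maxSet V (ψ + s • -φ), x ∈ maxSet V φ → x ∈ maxSet V ψ := by
    intro x hx hxC
    by_contra hxB
    have := hnew x hx hxB
    simp [apply_eq_of_mem_maxSet (hBC hb) hxC] at this
  obtain ⟨D, hD, hBD, hDB₁, hdim⟩ := IsExposedSubset.exists_dim_eq_add_one ⟨ψ, rfl⟩ ⟨_, rfl⟩ hss
  have hDC : ¬ D ⊆ maxSet V φ := fun h ↦ hBD.not_subset fun x hx ↦ hinter x (hDB₁ hx) (h hx)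
  refine ⟨D, hD, hBD.subset, eq_of_subset_of_card_le (fun F hF ↦ ?_) ?_⟩
  · exact mem_erase.2 ⟨by rintro rfl; exact hDC (mem_facetsContaining.1 hF).2.2,
      facetsContaining_anti hBD.subset hF⟩
  · rw [card_erase_of_mem hC, card_facetsContaining hV hpos hsimple ⟨ψ, rfl⟩,
      card_facetsContaining hV hpos hsimple hD, hdim]
    omega

lemma exists_facetsContaining_eq (hV : affineSpan ℝ (V : Set E) = ⊤) (hpos : 0 < finrank ℝ E)
    (hsimple : HasSimpleVertices V) (hB : IsExposedSubset V B) {T : Finset (Finset E)}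
    (hT : T ⊆ facetsContaining V B) :
    ∃ D, IsExposedSubset V D ∧ B ⊆ D ∧ facetsContaining V D = T := by
  suffices ∀ U ⊆ facetsContaining V B,
      ∃ D, IsExposedSubset V D ∧ B ⊆ D ∧ facetsContaining V D = facetsContaining V B \ U by
    simpa only [Finset.sdiff_sdiff_eq_self hT] using this (facetsContaining V B \ T) sdiff_subset
  intro U hU
  induction U using Finset.induction_on with
  | empty => exact ⟨B, hB, Subset.rfl, sdiff_empty.symm⟩
  | insert C U hCU ih =>
    obtain ⟨D, hD, hBD, hDU⟩ := ih ((subset_insert _ _).trans hU)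
    have hC : C ∈ facetsContaining V D := hDU ▸ mem_sdiff.2 ⟨hU (mem_insert_self _ _), hCU⟩
    obtain ⟨D', hD', hDD', hD'C⟩ := exists_facetsContaining_eq_erase hV hpos hsimple hD hC
    exact ⟨D', hD', hBD.trans hDD', by rw [hD'C, hDU, sdiff_insert]⟩

end Facets

section GWeights

open Polynomial

lemma sum_powerset_erase_X_sub_one_pow {α : Type*} [DecidableEq α] (s : Finset α) :
    ∑ t ∈ s.powerset.erase s, (X - 1 : ℤ[X]) ^ (#s - #t - 1) = ∑ i ∈ range #s, X ^ i := by
  refine mul_left_cancel₀ (by simpa using X_sub_C_ne_zero (1 : ℤ)) ?_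
  have hterm : ∀ t ∈ s.powerset.erase s,
      (X - 1 : ℤ[X]) * (X - 1) ^ (#s - #t - 1) = 1 ^ #t * (X - 1) ^ (#s - #t) := by
    intro t ht
    obtain ⟨hts, hts'⟩ := mem_erase.1 ht
    have := card_lt_card (ssubset_of_subset_of_ne (mem_powerset.1 hts') hts)
    rw [one_pow, one_mul, ← pow_succ']
    congr 1
    omega
  rw [mul_geom_sum, mul_sum, sum_congr rfl hterm, sum_erase_eq_sub (mem_powerset_self s),
    sum_pow_mul_eq_add_pow]
  simp

/-- The passage from `h̃_Q` to `g̃_Q` in `gRecursion`, for a face of codimension `d + 1`. -/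
def gOfH (d : ℕ) (h : ℤ[X]) : ℤ[X] :=
  C (h.coeff 0) + ∑ i ∈ Icc 1 (d / 2), C (h.coeff i - h.coeff (i - 1)) * X ^ i

lemma gOfH_sum_range_X_pow {c d : ℕ} (hd : d < c) : gOfH d (∑ i ∈ range c, X ^ i) = 1 := by
  have hcoeff {j : ℕ} (hj : j < c) : (∑ i ∈ range c, X ^ i : ℤ[X]).coeff j = 1 := by
    simp [finsetSum_coeff, coeff_X_pow, hj]
  rw [gOfH, hcoeff (by omega), C_1, add_eq_left]
  refine sum_eq_zero fun i hi ↦ ?_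
  have := (mem_Icc.1 hi).2.trans (Nat.div_le_self d 2)
  rw [hcoeff (by omega), hcoeff (by omega), sub_self, C_0, zero_mul]

end GWeights

section LatticePolytope

open Polynomial

variable {n : ℕ} {V B : Finset (Fin n → ℝ)}

lemma pdim_convexHull (B : Finset (Fin n → ℝ)) :
    pdim (convexHull ℝ (B : Set (Fin n → ℝ))) = dim B := by
  rw [pdim, dim, affineSpan_convexHull, direction_affineSpan]

lemma faces_convexHull (hV : V.Nonempty) :
    faces (convexHull ℝ (V : Set (Fin n → ℝ))) =
      (fun B : Finset _ ↦ convexHull ℝ (B : Set (Fin n → ℝ))) '' {B | IsExposedSubset V B} := by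
  ext Q
  constructor
  · rintro ⟨rfl | ⟨φ, rfl⟩, -⟩
    · exact ⟨V, .refl V, rfl⟩
    · exact ⟨maxSet V φ, ⟨φ, rfl⟩, (exposedFace_convexHull V φ).symm⟩
  · rintro ⟨B, ⟨φ, rfl⟩, rfl⟩
    exact ⟨Or.inr ⟨φ, (exposedFace_convexHull V φ).symm⟩,
      convexHull_nonempty_iff.2 (coe_nonempty.2 (maxSet_nonempty hV))⟩

lemma setOf_isFace_convexHull_ssuperset (hV : V.Nonempty) (hB : IsExposedSubset V B) :
    {R | IsFace (convexHull ℝ (V : Set (Fin n → ℝ))) R ∧ convexHull ℝ (B : Set _) ⊂ R} =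
      (fun C : Finset _ ↦ convexHull ℝ (C : Set (Fin n → ℝ))) ''
        {C | IsExposedSubset V C ∧ B ⊂ C} := by
  ext R
  constructor
  · rintro ⟨hR, hBR⟩
    have hRface : R ∈ faces (convexHull ℝ (V : Set (Fin n → ℝ))) :=
      ⟨hR, (convexHull_nonempty_iff.2 (coe_nonempty.2 (hB.nonempty hV))).mono hBR.subset⟩
    rw [faces_convexHull hV] at hRface
    obtain ⟨C, hC, rfl⟩ := hRface
    exact ⟨C, ⟨hC, (convexHull_ssubset_convexHull_iff hB hC).1 hBR⟩, rfl⟩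
  · rintro ⟨C, ⟨hC, hBC⟩, rfl⟩
    have hCface : convexHull ℝ (C : Set (Fin n → ℝ)) ∈ faces (convexHull ℝ ↑V) := by
      rw [faces_convexHull hV]
      exact ⟨C, hC, rfl⟩
    exact ⟨hCface.1, (convexHull_ssubset_convexHull_iff hB hC).2 hBC⟩

lemma hasSimpleVertices_of_isSimple (hV : V.Nonempty)
    (hs : IsSimple n (convexHull ℝ (V : Set (Fin n → ℝ)))) : HasSimpleVertices V := by
  intro v hv
  have hvV : v ∈ V := hv.subset (mem_singleton_self v)
  have hface : ({v} : Set (Fin n → ℝ)) ∈ faces (convexHull ℝ ↑V) := by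
    rw [faces_convexHull hV]
    exact ⟨{v}, hv, by simp⟩
  have hdim : pdim ({v} : Set (Fin n → ℝ)) = 0 := by
    simpa using (pdim_convexHull {v}).trans (dim_singleton v)
  rw [finrank_fin_fun]
  refine Eq.trans ?_ (hs _ hface hdim)
  rw [← Set.ncard_coe_finset,
    ← (convexHull_injOn.mono fun C hC ↦ (mem_facetsContaining.1 hC).1).ncard_image]
  congr 1
  ext F
  rw [Set.mem_image]
  constructor
  · rintro ⟨C, hC, rfl⟩
    obtain ⟨hC, hCdim, hvC⟩ := mem_facetsContaining.1 hC
    refine ⟨faces_convexHull hV ▸ ⟨C, hC, rfl⟩, ?_, ?_⟩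
    · rw [pdim_convexHull, hCdim, finrank_fin_fun]
    · exact Set.singleton_subset_iff.2 (subset_convexHull ℝ _ (singleton_subset_iff.1 hvC))
  · rintro ⟨hF, hFdim, hvF⟩
    rw [faces_convexHull hV] at hF
    obtain ⟨C, hC, rfl⟩ := hF
    refine ⟨C, mem_facetsContaining.2 ⟨hC, ?_, ?_⟩, rfl⟩
    · rwa [finrank_fin_fun, ← pdim_convexHull]
    · exact singleton_subset_iff.2 ((hC.mem_convexHull_iff hvV).1 (hvF rfl))

lemma finsum_superfaces_eq (hV : affineSpan ℝ (V : Set (Fin n → ℝ)) = ⊤)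
    (hpos : 0 < finrank ℝ (Fin n → ℝ)) (hsimple : HasSimpleVertices V) (hB : IsExposedSubset V B)
    {g : Set (Fin n → ℝ) → ℤ[X]} (hg : ∀ C, IsExposedSubset V C → B ⊂ C → g (convexHull ℝ ↑C) = 1) :
    ∑ᶠ R ∈ {R | IsFace (convexHull ℝ (V : Set (Fin n → ℝ))) R ∧ convexHull ℝ ↑B ⊂ R},
        g R * (X - 1) ^ (pdim R - pdim (convexHull ℝ (B : Set (Fin n → ℝ))) - 1) =
      ∑ i ∈ range #(facetsContaining V B), X ^ i := by
  have hVne := nonempty_of_affineSpan_eq_top hV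
  have hcard {C} := card_facetsContaining (B := C) hV hpos hsimple
  rw [setOf_isFace_convexHull_ssuperset hVne hB,
    finsum_mem_image (convexHull_injOn.mono fun C hC ↦ hC.1),
    ← sum_powerset_erase_X_sub_one_pow, ← finsum_mem_coe_finset]
  -- a superface is determined by the facets containing it, which may be any proper subset
  refine finsum_mem_eq_of_bijOn (facetsContaining V) ⟨fun C ⟨hC, hBC⟩ ↦ ?_,
    (facetsContaining_injOn hV).mono fun C hC ↦ hC.1, fun T hT ↦ ?_⟩ fun C ⟨hC, hBC⟩ ↦ ?_
  · have := facetsContaining_ssubset hV hB hC hBC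
    exact mem_erase.2 ⟨this.ne, mem_powerset.2 this.subset⟩
  · obtain ⟨hTne, hT⟩ := mem_erase.1 (mem_coe.1 hT)
    obtain ⟨D, hD, hBD, rfl⟩ := exists_facetsContaining_eq hV hpos hsimple hB (mem_powerset.1 hT)
    exact ⟨D, ⟨hD, ssubset_of_subset_of_ne hBD (by rintro rfl; exact hTne rfl)⟩, rfl⟩
  · have := hB.dim_lt_dim hC.subset hBC
    have := dim_le_finrank C
    rw [hg C hC hBC, one_mul, pdim_convexHull, pdim_convexHull, hcard hB, hcard hC]
    congr 1
    omega

lemma g_convexHull_eq_one_of_forall_ssuperset (hV : affineSpan ℝ (V : Set (Fin n → ℝ)) = ⊤)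
    (hsimple : HasSimpleVertices V) {g : Set (Fin n → ℝ) → ℤ[X]}
    (hg : gRecursion n (convexHull ℝ ↑V) g) (hB : IsExposedSubset V B) (hBV : B ≠ V)
    (ih : ∀ C, IsExposedSubset V C → B ⊂ C → g (convexHull ℝ ↑C) = 1) :
    g (convexHull ℝ ↑B) = 1 := by
  have hVne := nonempty_of_affineSpan_eq_top hV
  have hlt : dim B < finrank ℝ (Fin n → ℝ) :=
    dim_eq_finrank hV ▸ hB.dim_lt_dim Subset.rfl (ssubset_of_subset_of_ne hB.subset hBV)
  have hface : convexHull ℝ (B : Set (Fin n → ℝ)) ∈ faces (convexHull ℝ ↑V) := by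
    rw [faces_convexHull hVne]
    exact ⟨B, hB, rfl⟩
  have hrec := hg.2 _ hface fun h ↦ hBV (convexHull_injOn hB (.refl V) h)
  rw [finsum_superfaces_eq hV (by omega) hsimple hB ih] at hrec
  refine hrec.trans (gOfH_sum_range_X_pow ?_)
  rw [card_facetsContaining hV (by omega) hsimple hB, pdim_convexHull]
  rw [finrank_fin_fun] at hlt ⊢
  omega

lemma g_convexHull_eq_one (hV : affineSpan ℝ (V : Set (Fin n → ℝ)) = ⊤)
    (hsimple : HasSimpleVertices V) {g : Set (Fin n → ℝ) → ℤ[X]}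
    (hg : gRecursion n (convexHull ℝ ↑V) g) (hB : IsExposedSubset V B) :
    g (convexHull ℝ ↑B) = 1 :=
  strongDownwardInduction (p := fun B ↦ IsExposedSubset V B → g (convexHull ℝ ↑B) = 1)
    (fun B ih _ hB ↦ if hBV : B = V then hBV ▸ hg.1 else
      g_convexHull_eq_one_of_forall_ssuperset hV hsimple hg hB hBV fun _ hC hBC ↦
        ih (card_le_card hC.subset) hBC hC)
    B (card_le_card hB.subset) hB

end LatticePolytope

end SimplePolytope

theorem g_weights_trivial_of_simple_general (n : ℕ) (P : Set (Fin n → ℝ))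
    (hP : IsFullLatticePolytope n P) (hs : IsSimple n P)
    (g : Set (Fin n → ℝ) → Polynomial ℤ) (hg : gRecursion n P g) :
    ∀ Q ∈ faces P, g Q = 1 := by
  open SimplePolytope in
  obtain ⟨V, -, rfl, hV⟩ := hP
  rw [affineSpan_convexHull] at hV
  have hVne := nonempty_of_affineSpan_eq_top hV
  intro Q hQ
  rw [faces_convexHull hVne] at hQ
  obtain ⟨B, hB, rfl⟩ := hQ
  exact g_convexHull_eq_one hV (hasSimpleVertices_of_isSimple hVne hs) hg hB

/-- **Triviality of Stanley's g-weights for simple polytopes.**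
If `P` is simple, then `g̃_Q(t) = 1` for every nonempty face `Q` of `P`. -/
theorem g_weights_trivial_of_simple (n : ℕ) (hn : 1 ≤ n) (P : Set (Fin n → ℝ))
    (hP : IsFullLatticePolytope n P) (hs : IsSimple n P)
    (g : Set (Fin n → ℝ) → Polynomial ℤ) (hg : gRecursion n P g) :
    ∀ Q ∈ faces P, g Q = 1 :=
  g_weights_trivial_of_simple_general n P hP hs g hg
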